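/- arXiv:1912.09089 — 2 statements merged into one kernel-verified Lean document; each statement's English description precedes it below -/
import Mathlib

section
/- Let q ≥ 3, n ≥ 2, and let S0 and S1 be disjoint nonempty q-ary codes of length n. Then the following are equivalent: (i) (S0, S1) is a spherical bitrade in H(n,q); (ii) d_{S0} = d_{S1} = 3 and χ_{S0} − χ_{S1} is a 0-eigenfunction of H(n,q); (iii) d_{S0} = d_{S1} = 3, d(S0, S1) = 2, and for each i ∈ {0,1} and each x ∈ S_i there are exactly (q−1)n/2 tuples of S_{1−i} at distance 2 from x. -/
open scoped BigOperators

/-- The ball of radius 1 centered at `x` in a graph `G`. -/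
def ball1 {V : Type*} (G : SimpleGraph V) (x : V) : Set V := {y | y = x ∨ G.Adj x y}

/-- A perfect one-error-correcting code: the balls of radius 1 centered at the
vertices of `C` partition the vertex set. -/
def IsPerfectCode {V : Type*} (G : SimpleGraph V) (C : Set V) : Prop :=
  ∀ x : V, ∃! c, c ∈ C ∧ c ∈ ball1 G x

/-- A perfect bitrade: a pair of disjoint nonempty vertex sets such that every ball of
radius 1 contains exactly one vertex of each, or none of either. -/
def IsPerfectBitrade {V : Type*} (G : SimpleGraph V) (T0 T1 : Set V) : Prop :=
  Disjoint T0 T1 ∧ T0.Nonempty ∧ T1.Nonempty ∧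
    ∀ x : V,
      ((∃! y, y ∈ T0 ∧ y ∈ ball1 G x) ∧ (∃! y, y ∈ T1 ∧ y ∈ ball1 G x)) ∨
        (∀ y, y ∈ T0 ∪ T1 → y ∉ ball1 G x)

/-- A spherical bitrade: a pair of disjoint nonempty vertex sets such that every sphere of
radius 1 contains exactly one vertex of each, or none of either. -/
def IsSphericalBitrade {V : Type*} (G : SimpleGraph V) (S0 S1 : Set V) : Prop :=
  Disjoint S0 S1 ∧ S0.Nonempty ∧ S1.Nonempty ∧
    ∀ x : V,
      ((∃! y, y ∈ S0 ∧ G.Adj x y) ∧ (∃! y, y ∈ S1 ∧ G.Adj x y)) ∨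
        (∀ y, y ∈ S0 ∪ S1 → ¬ G.Adj x y)

/-- The Hamming graph `H(n,q)`: vertices are `n`-tuples over an alphabet of size `q`,
adjacent iff they differ in exactly one coordinate. -/
def hammingGraph (n q : ℕ) : SimpleGraph (Fin n → Fin q) where
  Adj x y := hammingDist x y = 1
  symm := ⟨by intro x y h; rwa [hammingDist_comm]⟩
  loopless := ⟨by intro x h; simp [hammingDist_self] at h⟩

/-- `f` is a `μ`-eigenfunction of `G`: `f` is not identically zero and
`μ · f x = ∑_{y ∈ O(x)} f y` for every vertex `x`. -/
def IsEigenfun {V : Type*} (G : SimpleGraph V) (μ : ℝ) (f : V → ℝ) : Prop :=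
  f ≠ 0 ∧ ∀ x : V, μ * f x = ∑ᶠ y ∈ G.neighborSet x, f y

/-- The characteristic function of a set of vertices. -/
noncomputable def chi {V : Type*} (C : Set V) : V → ℝ := Set.indicator C 1

/-- The code `C` has minimum (graph) distance exactly `d`. -/
def HasMinDist {V : Type*} (G : SimpleGraph V) (C : Set V) (d : ℕ) : Prop :=
  (∀ x ∈ C, ∀ y ∈ C, x ≠ y → (d : ℕ∞) ≤ G.edist x y) ∧
    ∃ x ∈ C, ∃ y ∈ C, x ≠ y ∧ G.edist x y = d

/-- The code `C` of `n`-tuples has minimum Hamming distance exactly `d`. -/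
def HasMinHDist {n q : ℕ} (C : Set (Fin n → Fin q)) (d : ℕ) : Prop :=
  (∀ x ∈ C, ∀ y ∈ C, x ≠ y → d ≤ hammingDist x y) ∧
    ∃ x ∈ C, ∃ y ∈ C, x ≠ y ∧ hammingDist x y = d

/-- `G` is distance-regular with intersection numbers `p i j k`. -/
def IsDistRegular {V : Type*} (G : SimpleGraph V) (p : ℕ → ℕ → ℕ → ℕ) : Prop :=
  G.Connected ∧ ∀ (i j k : ℕ) (x y : V), G.edist x y = k →
    {z : V | G.edist x z = i ∧ G.edist z y = j}.ncard = p i j k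

/-!
A pair `(S0, S1)` is a spherical bitrade iff every sphere of radius 1 meets each `Sᵢ` in at most
one point and meets `S0` iff it meets `S1`. For `q ≥ 3` two distinct words at distance at most 2
have a common neighbour, so the first condition says that `d_{Sᵢ} ≥ 3`; given it, the second says
that `χ_{S0} - χ_{S1}` has zero sum over every sphere, which is (ii).

For (iii), fix `x ∈ S0` and count the paths `x ~ z ~ y` with `y ∈ S1`. Once `d(x, S1) ≥ 2`, words
at distance 2 have exactly two common neighbours and words at distance at least 3 have none, so
the count is `2 · #{y ∈ S1 | d(x,y) = 2}`. As each sphere contains at most one point of `S1`, the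
count equals the degree `(q-1)n` exactly when every neighbour of `x` has a neighbour in `S1`.
-/

open Finset Function

theorem Set.Subsingleton.ncard_le_one {α : Type*} {s : Set α} (hs : s.Subsingleton) :
    s.ncard ≤ 1 := by
  rcases hs.eq_empty_or_singleton with rfl | ⟨a, rfl⟩ <;> simp

theorem Set.Subsingleton.ncard_eq_one_iff {α : Type*} {s : Set α} (hs : s.Subsingleton) :
    s.ncard = 1 ↔ s.Nonempty := by
  rcases hs.eq_empty_or_singleton with rfl | ⟨a, rfl⟩ <;> simp

theorem Set.Subsingleton.ncard_eq_ncard_iff {α : Type*} {s t : Set α} (hs : s.Subsingleton)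
    (ht : t.Subsingleton) : s.ncard = t.ncard ↔ (s.Nonempty ↔ t.Nonempty) := by
  rcases hs.eq_empty_or_singleton with rfl | ⟨a, rfl⟩ <;>
    rcases ht.eq_empty_or_singleton with rfl | ⟨b, rfl⟩ <;> simp

section SphericalBitrade

variable {V : Type*} {G : SimpleGraph V} {S S0 S1 : Set V}

theorem existsUnique_mem_adj_iff {x : V} :
    (∃! y, y ∈ S ∧ G.Adj x y) ↔
      (G.neighborSet x ∩ S).Nonempty ∧ (G.neighborSet x ∩ S).Subsingleton := by
  rw [← Set.exists_eq_singleton_iff_nonempty_subsingleton]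
  simp only [Set.eq_singleton_iff_unique_mem, ExistsUnique, Set.mem_inter_iff,
    SimpleGraph.mem_neighborSet, and_comm]

theorem isSphericalBitrade_iff :
    IsSphericalBitrade G S0 S1 ↔ Disjoint S0 S1 ∧ S0.Nonempty ∧ S1.Nonempty ∧
      (∀ x, (G.neighborSet x ∩ S0).Subsingleton) ∧ (∀ x, (G.neighborSet x ∩ S1).Subsingleton) ∧
      ∀ x, ((G.neighborSet x ∩ S0).Nonempty ↔ (G.neighborSet x ∩ S1).Nonempty) := by
  have hlocal : ∀ x, (((∃! y, y ∈ S0 ∧ G.Adj x y) ∧ (∃! y, y ∈ S1 ∧ G.Adj x y)) ∨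
      (∀ y, y ∈ S0 ∪ S1 → ¬ G.Adj x y)) ↔
      (G.neighborSet x ∩ S0).Subsingleton ∧ (G.neighborSet x ∩ S1).Subsingleton ∧
        ((G.neighborSet x ∩ S0).Nonempty ↔ (G.neighborSet x ∩ S1).Nonempty) := by
    intro x
    have hnone : (∀ y, y ∈ S0 ∪ S1 → ¬ G.Adj x y) ↔
        ¬ (G.neighborSet x ∩ S0).Nonempty ∧ ¬ (G.neighborSet x ∩ S1).Nonempty := by
      simp only [Set.mem_union, Set.Nonempty, Set.mem_inter_iff, SimpleGraph.mem_neighborSet]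
      grind
    have hempty : ∀ s : Set V, ¬ s.Nonempty → s.Subsingleton := fun s hs =>
      Set.not_nonempty_iff_eq_empty.1 hs ▸ Set.subsingleton_empty
    rw [existsUnique_mem_adj_iff, existsUnique_mem_adj_iff, hnone]
    have := hempty (G.neighborSet x ∩ S0)
    have := hempty (G.neighborSet x ∩ S1)
    tauto
  simp only [IsSphericalBitrade, hlocal, forall_and]

namespace IsSphericalBitrade

theorem subsingleton_neighborSet_inter (h : IsSphericalBitrade G S0 S1) (x : V) :
    (G.neighborSet x ∩ S0).Subsingleton :=
  (isSphericalBitrade_iff.1 h).2.2.2.1 x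

theorem nonempty_neighborSet_inter_iff (h : IsSphericalBitrade G S0 S1) (x : V) :
    (G.neighborSet x ∩ S0).Nonempty ↔ (G.neighborSet x ∩ S1).Nonempty :=
  (isSphericalBitrade_iff.1 h).2.2.2.2.2 x

theorem symm (h : IsSphericalBitrade G S0 S1) : IsSphericalBitrade G S1 S0 := by
  obtain ⟨hdisj, h0, h1, hs0, hs1, hiff⟩ := isSphericalBitrade_iff.1 h
  exact isSphericalBitrade_iff.2 ⟨hdisj.symm, h1, h0, hs1, hs0, fun x => (hiff x).symm⟩

theorem nonempty_neighborSet_inter_of_adj (h : IsSphericalBitrade G S0 S1) {x z : V}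
    (hx : x ∈ S0) (hxz : G.Adj x z) :
    (G.neighborSet z ∩ S1).Nonempty :=
  (h.nonempty_neighborSet_inter_iff z).1 ⟨x, hxz.symm, hx⟩

end IsSphericalBitrade

theorem finsum_mem_neighborSet_chi [G.LocallyFinite] (S : Set V) (x : V) :
    ∑ᶠ y ∈ G.neighborSet x, chi S y = (G.neighborSet x ∩ S).ncard := by
  classical
  have hfilter :
      (↑(G.neighborFinset x) ∩ S : Set V) = ↑((G.neighborFinset x).filter (· ∈ S)) := by
    ext; simp
  rw [← SimpleGraph.coe_neighborFinset, finsum_mem_coe_finset, hfilter, Set.ncard_coe_finset]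
  simp [chi, Set.indicator_apply]

theorem isEigenfun_zero_chi_sub_iff [G.LocallyFinite] (hdisj : Disjoint S0 S1)
    (h0 : S0.Nonempty) :
    IsEigenfun G 0 (chi S0 - chi S1) ↔
      ∀ x, (G.neighborSet x ∩ S0).ncard = (G.neighborSet x ∩ S1).ncard := by
  have hne : chi S0 - chi S1 ≠ 0 := by
    obtain ⟨x, hx⟩ := h0
    intro h
    simpa [chi, hx, hdisj.notMem_of_mem_left hx] using congrFun h x
  have hsum : ∀ x, ∑ᶠ y ∈ G.neighborSet x, (chi S0 - chi S1) y =
      (G.neighborSet x ∩ S0).ncard - (G.neighborSet x ∩ S1).ncard := by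
    intro x
    rw [Pi.sub_def, finsum_mem_sub_distrib _ _ (G.neighborSet x).toFinite,
      finsum_mem_neighborSet_chi, finsum_mem_neighborSet_chi]
  simp only [IsEigenfun, ne_eq, hne, not_false_eq_true, zero_mul, hsum, true_and]
  exact forall_congr' fun x => by rw [eq_comm, sub_eq_zero, Nat.cast_inj]

theorem IsSphericalBitrade.isEigenfun_zero_chi_sub [G.LocallyFinite]
    (h : IsSphericalBitrade G S0 S1) : IsEigenfun G 0 (chi S0 - chi S1) :=
  (isEigenfun_zero_chi_sub_iff h.1 h.2.1).2 fun x =>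
    ((h.subsingleton_neighborSet_inter x).ncard_eq_ncard_iff
      (h.symm.subsingleton_neighborSet_inter x)).2 (h.nonempty_neighborSet_inter_iff x)

theorem isSphericalBitrade_of_isEigenfun_zero [G.LocallyFinite] (hdisj : Disjoint S0 S1)
    (h0 : S0.Nonempty) (h1 : S1.Nonempty) (hs0 : ∀ x, (G.neighborSet x ∩ S0).Subsingleton)
    (hs1 : ∀ x, (G.neighborSet x ∩ S1).Subsingleton)
    (heig : IsEigenfun G 0 (chi S0 - chi S1)) : IsSphericalBitrade G S0 S1 :=
  isSphericalBitrade_iff.2 ⟨hdisj, h0, h1, hs0, hs1, fun x =>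
    ((hs0 x).ncard_eq_ncard_iff (hs1 x)).1 ((isEigenfun_zero_chi_sub_iff hdisj h0).1 heig x)⟩

theorem isSphericalBitrade_of_forall_adj_nonempty (hdisj : Disjoint S0 S1) (h0 : S0.Nonempty)
    (h1 : S1.Nonempty) (hs0 : ∀ x, (G.neighborSet x ∩ S0).Subsingleton)
    (hs1 : ∀ x, (G.neighborSet x ∩ S1).Subsingleton)
    (h01 : ∀ x ∈ S0, ∀ z, G.Adj x z → (G.neighborSet z ∩ S1).Nonempty)
    (h10 : ∀ y ∈ S1, ∀ z, G.Adj y z → (G.neighborSet z ∩ S0).Nonempty) :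
    IsSphericalBitrade G S0 S1 :=
  isSphericalBitrade_iff.2 ⟨hdisj, h0, h1, hs0, hs1, fun z =>
    ⟨fun ⟨x, hzx, hx⟩ => h01 x hx z hzx.symm, fun ⟨y, hzy, hy⟩ => h10 y hy z hzy.symm⟩⟩

end SphericalBitrade

section HammingDist

variable {ι α : Type*} [DecidableEq ι]

theorem eq_and_eq_of_update_eq_update {x : ι → α} {i j : ι} {a b : α} (ha : a ≠ x i)
    (h : update x i a = update x j b) : i = j ∧ a = b := by
  have hij : i = j := by
    by_contra hij
    have := congrFun h i
    rw [update_self, update_of_ne hij] at this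
    exact ha this
  subst hij
  exact ⟨rfl, by simpa using congrFun h i⟩

variable [Fintype ι] [DecidableEq α]

theorem exists_ne_ne_of_three_le_card [Fintype α] (hα : 3 ≤ Fintype.card α) (a b : α) :
    ∃ c, c ≠ a ∧ c ≠ b := by
  obtain ⟨c, hc, hcb⟩ := (univ.erase a).exists_mem_ne
    (by rw [card_erase_of_mem (mem_univ a), card_univ]; omega) b
  exact ⟨c, ne_of_mem_erase hc, hcb⟩

theorem hammingDist_update_left_add (x y : ι → α) (i : ι) (a : α) :
    hammingDist (update x i a) y + (if x i = y i then 0 else 1) =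
      hammingDist x y + (if a = y i then 0 else 1) := by
  have hsplit : ∀ z : ι → α, hammingDist z y =
      (if z i = y i then 0 else 1) + ∑ k ∈ univ.erase i, if z k = y k then 0 else 1 := by
    intro z
    rw [add_sum_erase univ (fun k => if z k = y k then 0 else 1) (mem_univ i), hammingDist,
      card_filter]
    simp only [ite_not]
  rw [hsplit (update x i a), hsplit x, update_self,
    sum_congr rfl fun k hk => by rw [update_of_ne (ne_of_mem_erase hk)]]
  ring

theorem hammingDist_update_self (x : ι → α) {i : ι} {a : α} (ha : a ≠ x i) :
    hammingDist x (update x i a) = 1 := by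
  have := hammingDist_update_left_add x x i a
  simp only [ha, if_true, if_false, hammingDist_self] at this
  rw [hammingDist_comm]; omega

theorem hammingDist_eq_one_iff {x z : ι → α} :
    hammingDist x z = 1 ↔ ∃ i, z i ≠ x i ∧ update x i (z i) = z := by
  constructor
  · intro h
    obtain ⟨i, hi⟩ := card_eq_one.1 h
    have hdiff : ∀ k, x k ≠ z k ↔ k = i := fun k => by
      simpa using congrArg (k ∈ ·) hi
    refine ⟨i, fun h => (hdiff i).2 rfl h.symm, update_eq_iff.2 ⟨rfl, fun k hk => ?_⟩⟩
    by_contra hne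
    exact hk ((hdiff k).1 hne)
  · rintro ⟨i, hi, hz⟩
    rw [← hz]
    exact hammingDist_update_self x hi

theorem card_hammingDist_eq_one [Fintype α] (x : ι → α) :
    #{z | hammingDist x z = 1} = (Fintype.card α - 1) * Fintype.card ι := by
  have himage : ({z | hammingDist x z = 1} : Finset (ι → α)) =
      (univ.sigma fun i => univ.erase (x i)).image fun p => update x p.1 p.2 := by
    ext z
    simp only [mem_filter, mem_univ, true_and, hammingDist_eq_one_iff, mem_image, mem_sigma,
      mem_erase, Sigma.exists, and_true]
    constructor
    · rintro ⟨i, hi, hz⟩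
      exact ⟨i, z i, hi, hz⟩
    · rintro ⟨i, a, ha, rfl⟩
      exact ⟨i, by simpa using ha, by simp⟩
  rw [himage, card_image_of_injOn, card_sigma]
  · simp [card_erase_of_mem, mul_comm]
  · rintro ⟨i, a⟩ hp ⟨j, b⟩ - h
    simp only [coe_sigma, Set.mem_sigma_iff, coe_univ, Set.mem_univ, coe_erase,
      Set.mem_sdiff, Set.mem_singleton_iff, true_and] at hp
    obtain ⟨rfl, rfl⟩ := eq_and_eq_of_update_eq_update hp h
    rfl

theorem card_hammingDist_eq_one_and_eq_one [Fintype α] {x y : ι → α} (h : hammingDist x y = 2) :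
    #{z | hammingDist x z = 1 ∧ hammingDist z y = 1} = 2 := by
  have himage : ({z | hammingDist x z = 1 ∧ hammingDist z y = 1} : Finset (ι → α)) =
      ({i | x i ≠ y i} : Finset ι).image fun i => update x i (y i) := by
    ext z
    simp only [mem_filter, mem_univ, true_and, mem_image]
    constructor
    · rintro ⟨hxz, hzy⟩
      obtain ⟨i, hi, hz⟩ := hammingDist_eq_one_iff.1 hxz
      have := hammingDist_update_left_add x y i (z i)
      rw [hz, hzy, h] at this
      obtain ⟨hxi, hzi⟩ : x i ≠ y i ∧ z i = y i := by split_ifs at this <;> grind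
      exact ⟨i, hxi, hzi ▸ hz⟩
    · rintro ⟨i, hi, rfl⟩
      have := hammingDist_update_left_add x y i (y i)
      refine ⟨hammingDist_update_self x (Ne.symm hi), ?_⟩
      simp only [hi, if_false, if_true] at this
      omega
  rw [himage, card_image_of_injOn fun i hi j _ hij =>
    (eq_and_eq_of_update_eq_update (by simpa [eq_comm] using hi) hij).1]
  exact h

end HammingDist

theorem SimpleGraph.sum_ncard_neighborSet_inter {V : Type*} (G : SimpleGraph V) [Fintype V]
    [DecidableRel G.Adj] (x : V) (S : Finset V) :
    ∑ z ∈ G.neighborFinset x, (G.neighborSet z ∩ S).ncard =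
      ∑ y ∈ S, (G.commonNeighbors x y).ncard := by
  classical
  have hleft : ∀ z, (G.neighborSet z ∩ S).ncard = ∑ y ∈ S, if G.Adj z y then 1 else 0 := by
    intro z
    rw [← card_filter, ← Set.ncard_coe_finset]
    congr 1; ext; simp [and_comm]
  have hright : ∀ y, (G.commonNeighbors x y).ncard =
      ∑ z ∈ G.neighborFinset x, if G.Adj z y then 1 else 0 := by
    intro y
    rw [← card_filter, ← Set.ncard_coe_finset]
    congr 1; ext; simp [SimpleGraph.mem_commonNeighbors, SimpleGraph.adj_comm]
  simp only [hleft, hright]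
  exact sum_comm

section HammingGraph

variable {n q : ℕ}

instance : DecidableRel (hammingGraph n q).Adj :=
  fun x y => inferInstanceAs (Decidable (hammingDist x y = 1))

@[simp] theorem hammingGraph_adj {x y : Fin n → Fin q} :
    (hammingGraph n q).Adj x y ↔ hammingDist x y = 1 := Iff.rfl

namespace hammingGraph

theorem card_neighborFinset (x : Fin n → Fin q) :
    #((hammingGraph n q).neighborFinset x) = (q - 1) * n := by
  have := card_hammingDist_eq_one x
  simp only [Fintype.card_fin] at this
  rw [← this]
  congr 1; ext; simp

theorem ncard_commonNeighbors {x y : Fin n → Fin q} (hxy : 2 ≤ hammingDist x y) :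
    ((hammingGraph n q).commonNeighbors x y).ncard = if hammingDist x y = 2 then 2 else 0 := by
  split_ifs with h2
  · rw [← card_hammingDist_eq_one_and_eq_one h2, ← Set.ncard_coe_finset]
    congr 1; ext; simp [SimpleGraph.mem_commonNeighbors, hammingDist_comm y]
  · rw [Set.ncard_eq_zero, Set.eq_empty_iff_forall_notMem]
    intro z hz
    simp only [SimpleGraph.mem_commonNeighbors, hammingGraph_adj] at hz
    have := hammingDist_triangle x z y
    rw [hz.1, hammingDist_comm z y, hz.2] at this
    omega

theorem exists_adj_adj_of_hammingDist_le_two (hq : 3 ≤ q) {x y : Fin n → Fin q} (hxy : x ≠ y)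
    (h : hammingDist x y ≤ 2) : ∃ z, hammingDist x z = 1 ∧ hammingDist z y = 1 := by
  obtain ⟨i, hi⟩ := Function.ne_iff.1 hxy
  obtain ⟨c, hcx, hcy⟩ := exists_ne_ne_of_three_le_card (by simpa using hq) (x i) (y i)
  have hpos := hammingDist_pos.2 hxy
  by_cases h1 : hammingDist x y = 1
  · refine ⟨update x i c, hammingDist_update_self x hcx, ?_⟩
    have := hammingDist_update_left_add x y i c
    simp only [hi, hcy, if_false] at this
    omega
  · refine ⟨update x i (y i), hammingDist_update_self x (Ne.symm hi), ?_⟩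
    have := hammingDist_update_left_add x y i (y i)
    simp only [hi, if_false, if_true] at this
    omega

theorem subsingleton_neighborSet_inter_iff (hq : 3 ≤ q) {S : Set (Fin n → Fin q)} :
    (∀ z, ((hammingGraph n q).neighborSet z ∩ S).Subsingleton) ↔
      ∀ x ∈ S, ∀ y ∈ S, x ≠ y → 3 ≤ hammingDist x y := by
  constructor
  · intro hS x hx y hy hxy
    by_contra! h
    obtain ⟨z, hxz, hzy⟩ := exists_adj_adj_of_hammingDist_le_two hq hxy (by omega)
    exact hxy (hS z ⟨by simpa [hammingDist_comm] using hxz, hx⟩ ⟨hzy, hy⟩)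
  · rintro hS z a ⟨hza, ha⟩ b ⟨hzb, hb⟩
    by_contra hab
    have := hammingDist_triangle a z b
    rw [hammingDist_comm a z] at this
    simp only [SimpleGraph.mem_neighborSet, hammingGraph_adj] at hza hzb
    have := hS a ha b hb hab
    omega

theorem sum_ncard_neighborSet_inter {S : Set (Fin n → Fin q)} {x : Fin n → Fin q}
    (hsep : ∀ y ∈ S, 2 ≤ hammingDist x y) :
    ∑ z ∈ (hammingGraph n q).neighborFinset x, ((hammingGraph n q).neighborSet z ∩ S).ncard =
      2 * {y ∈ S | hammingDist x y = 2}.ncard := by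
  classical
  have := (hammingGraph n q).sum_ncard_neighborSet_inter x S.toFinset
  rw [Set.coe_toFinset] at this
  rw [this, sum_congr rfl fun y hy => ncard_commonNeighbors (hsep y (by simpa using hy)),
    sum_ite, sum_const, sum_const_zero, smul_eq_mul, add_zero, mul_comm, ← Set.ncard_coe_finset]
  congr 2; ext; simp

theorem forall_nonempty_neighborSet_inter_iff {S : Set (Fin n → Fin q)} {x : Fin n → Fin q}
    (hS : ∀ z, ((hammingGraph n q).neighborSet z ∩ S).Subsingleton)
    (hsep : ∀ y ∈ S, 2 ≤ hammingDist x y) :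
    (∀ z, (hammingGraph n q).Adj x z → ((hammingGraph n q).neighborSet z ∩ S).Nonempty) ↔
      2 * {y ∈ S | hammingDist x y = 2}.ncard = (q - 1) * n := by
  rw [← sum_ncard_neighborSet_inter hsep, ← card_neighborFinset x,
    card_eq_sum_ones, sum_eq_sum_iff_of_le fun z _ => (hS z).ncard_le_one]
  simp only [SimpleGraph.mem_neighborFinset, (hS _).ncard_eq_one_iff]

end hammingGraph

end HammingGraph

namespace IsSphericalBitrade

variable {n q : ℕ} {S0 S1 : Set (Fin n → Fin q)}

theorem three_le_hammingDist (hq : 3 ≤ q) (h : IsSphericalBitrade (hammingGraph n q) S0 S1) :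
    ∀ x ∈ S0, ∀ y ∈ S0, x ≠ y → 3 ≤ hammingDist x y :=
  (hammingGraph.subsingleton_neighborSet_inter_iff hq).1 h.subsingleton_neighborSet_inter

theorem two_le_hammingDist (hq : 3 ≤ q) (h : IsSphericalBitrade (hammingGraph n q) S0 S1)
    {x y : Fin n → Fin q} (hx : x ∈ S0) (hy : y ∈ S1) : 2 ≤ hammingDist x y := by
  have hpos := hammingDist_pos.2 (h.1.ne_of_mem hx hy)
  by_contra! hlt
  have hyx : (hammingGraph n q).Adj y x := by rw [hammingGraph_adj, hammingDist_comm]; omega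
  obtain ⟨w, hxw, hw⟩ := h.symm.nonempty_neighborSet_inter_of_adj hy hyx
  have := h.three_le_hammingDist hq x hx w hw ((hammingGraph n q).ne_of_adj hxw)
  simp only [SimpleGraph.mem_neighborSet, hammingGraph_adj] at hxw
  omega

theorem exists_hammingDist_eq_two (hq : 3 ≤ q) (h : IsSphericalBitrade (hammingGraph n q) S0 S1) :
    ∃ x ∈ S0, ∃ y ∈ S1, hammingDist x y = 2 := by
  obtain ⟨x, hx⟩ := h.2.1
  obtain ⟨y, hy⟩ := h.2.2.1
  obtain ⟨i, hi⟩ := Function.ne_iff.1 (h.1.ne_of_mem hx hy)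
  have hxz := hammingDist_update_self x (Ne.symm hi)
  obtain ⟨y', hzy', hy'⟩ := h.nonempty_neighborSet_inter_of_adj hx hxz
  have := hammingDist_triangle x (update x i (y i)) y'
  have := h.two_le_hammingDist hq hx hy'
  simp only [SimpleGraph.mem_neighborSet, hammingGraph_adj] at hzy'
  exact ⟨x, hx, y', hy', by omega⟩

theorem exists_hammingDist_eq_three (hq : 3 ≤ q)
    (h : IsSphericalBitrade (hammingGraph n q) S0 S1) :
    ∃ x ∈ S0, ∃ x' ∈ S0, x ≠ x' ∧ hammingDist x x' = 3 := by
  obtain ⟨x, hx, y, hy, hxy⟩ := h.exists_hammingDist_eq_two hq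
  obtain ⟨i, hi⟩ := Function.ne_iff.1 (hammingDist_pos.1 (by omega : 0 < hammingDist x y))
  obtain ⟨c, hcx, hcy⟩ := exists_ne_ne_of_three_le_card (by simpa using hq) (x i) (y i)
  have hwx : hammingDist x (update y i c) = 2 := by
    have := hammingDist_update_left_add y x i c
    simp only [Ne.symm hi, hcx, if_false, hammingDist_comm y x, hxy] at this
    rw [hammingDist_comm]
    omega
  obtain ⟨x', hwx', hx'⟩ :=
    h.symm.nonempty_neighborSet_inter_of_adj hy (hammingDist_update_self y hcy)
  simp only [SimpleGraph.mem_neighborSet, hammingGraph_adj] at hwx'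
  have hne : x ≠ x' := by rintro rfl; rw [hammingDist_comm] at hwx'; omega
  have := hammingDist_triangle x (update y i c) x'
  have := h.three_le_hammingDist hq x hx x' hx' hne
  exact ⟨x, hx, x', hx', hne, by omega⟩

theorem hasMinHDist_three (hq : 3 ≤ q) (h : IsSphericalBitrade (hammingGraph n q) S0 S1) :
    HasMinHDist S0 3 :=
  ⟨h.three_le_hammingDist hq, h.exists_hammingDist_eq_three hq⟩

theorem two_mul_ncard_hammingDist_eq_two (hq : 3 ≤ q)
    (h : IsSphericalBitrade (hammingGraph n q) S0 S1) {x : Fin n → Fin q} (hx : x ∈ S0) :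
    2 * {y ∈ S1 | hammingDist x y = 2}.ncard = (q - 1) * n :=
  (hammingGraph.forall_nonempty_neighborSet_inter_iff h.symm.subsingleton_neighborSet_inter
    fun _ hy => h.two_le_hammingDist hq hx hy).1 fun _ => h.nonempty_neighborSet_inter_of_adj hx

end IsSphericalBitrade

theorem statement6_general (q n : ℕ) (hq : 3 ≤ q)
    (S0 S1 : Set (Fin n → Fin q)) (hdisj : Disjoint S0 S1)
    (h0 : S0.Nonempty) (h1 : S1.Nonempty) :
    (IsSphericalBitrade (hammingGraph n q) S0 S1 ↔
      (HasMinHDist S0 3 ∧ HasMinHDist S1 3 ∧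
        IsEigenfun (hammingGraph n q) 0 (chi S0 - chi S1))) ∧
    (IsSphericalBitrade (hammingGraph n q) S0 S1 ↔
      (HasMinHDist S0 3 ∧ HasMinHDist S1 3 ∧
        (∀ x ∈ S0, ∀ y ∈ S1, 2 ≤ hammingDist x y) ∧
        (∃ x ∈ S0, ∃ y ∈ S1, hammingDist x y = 2) ∧
        (∀ x ∈ S0, 2 * {y ∈ S1 | hammingDist x y = 2}.ncard = (q - 1) * n) ∧
        (∀ x ∈ S1, 2 * {y ∈ S0 | hammingDist x y = 2}.ncard = (q - 1) * n))) := by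
  have hss {S : Set (Fin n → Fin q)} (hS : HasMinHDist S 3) :
      ∀ z, ((hammingGraph n q).neighborSet z ∩ S).Subsingleton :=
    (hammingGraph.subsingleton_neighborSet_inter_iff hq).2 hS.1
  refine ⟨⟨fun h => ⟨h.hasMinHDist_three hq, h.symm.hasMinHDist_three hq,
      h.isEigenfun_zero_chi_sub⟩, fun ⟨hm0, hm1, heig⟩ =>
      isSphericalBitrade_of_isEigenfun_zero hdisj h0 h1 (hss hm0) (hss hm1) heig⟩,
    ⟨fun h => ⟨h.hasMinHDist_three hq, h.symm.hasMinHDist_three hq,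
      fun _ hx _ hy => h.two_le_hammingDist hq hx hy, h.exists_hammingDist_eq_two hq,
      fun _ hx => h.two_mul_ncard_hammingDist_eq_two hq hx,
      fun _ hx => h.symm.two_mul_ncard_hammingDist_eq_two hq hx⟩, ?_⟩⟩
  rintro ⟨hm0, hm1, hsep, -, hc0, hc1⟩
  refine isSphericalBitrade_of_forall_adj_nonempty hdisj h0 h1 (hss hm0) (hss hm1)
    (fun x hx => ?_) (fun y hy => ?_)
  · exact (hammingGraph.forall_nonempty_neighborSet_inter_iff (hss hm1) (hsep x hx)).2 (hc0 x hx)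
  · exact (hammingGraph.forall_nonempty_neighborSet_inter_iff (hss hm0)
      fun x hx => hammingDist_comm x y ▸ hsep x hx y hy).2 (hc1 y hy)

/-- For `q ≥ 3`, `n ≥ 2` and disjoint nonempty `q`-ary codes `S0, S1` of length
`n`: (i) `(S0,S1)` is a spherical bitrade in `H(n,q)` iff (ii) `d_{S0} = d_{S1} = 3` and
`χ_{S0} - χ_{S1}` is a `0`-eigenfunction of `H(n,q)`, and (i) holds iff (iii)
`d_{S0} = d_{S1} = 3`, `d(S0,S1) = 2`, and each `x ∈ S_i` has exactly `(q-1)n/2` tuples of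
`S_{1-i}` at distance 2 from it. -/
theorem statement6 (q n : ℕ) (hq : 3 ≤ q) (hn : 2 ≤ n)
    (S0 S1 : Set (Fin n → Fin q)) (hdisj : Disjoint S0 S1)
    (h0 : S0.Nonempty) (h1 : S1.Nonempty) :
    (IsSphericalBitrade (hammingGraph n q) S0 S1 ↔
      (HasMinHDist S0 3 ∧ HasMinHDist S1 3 ∧
        IsEigenfun (hammingGraph n q) 0 (chi S0 - chi S1))) ∧
    (IsSphericalBitrade (hammingGraph n q) S0 S1 ↔
      (HasMinHDist S0 3 ∧ HasMinHDist S1 3 ∧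
        (∀ x ∈ S0, ∀ y ∈ S1, 2 ≤ hammingDist x y) ∧
        (∃ x ∈ S0, ∃ y ∈ S1, hammingDist x y = 2) ∧
        (∀ x ∈ S0, 2 * {y ∈ S1 | hammingDist x y = 2}.ncard = (q - 1) * n) ∧
        (∀ x ∈ S1, 2 * {y ∈ S0 | hammingDist x y = 2}.ncard = (q - 1) * n))) :=
  statement6_general q n hq S0 S1 hdisj h0 h1
end

section
/- Let q ≥ 3. The volume of any nonempty perfect bitrade in the Hamming graph H(q+1, q) is at least q!. -/
open scoped BigOperators

/-!
Each half of a perfect bitrade in `H(n,q)` has minimum distance `3`, and every `u ∈ T0` has a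
unique neighbour `update u j e` in `T1`. Take a subcube `Q` through `u` with fixed coordinates
`C` and a free coordinate `k ≠ j`. For `c ≠ u k` the ball around `update u k c` contains `u`,
hence a point of `T1`; distance `3` forces that point to change a third coordinate `t`, which
lies in `C \ {j}` unless `T1 ∩ Q` has a point with `k`-th coordinate `c`, and distance `3`
again makes `t` determine `c`. So `T0 ∪ T1` takes at least `q - |C|` values of the `k`-th
coordinate on `Q`, each value giving a subcube of one dimension less through a point of the
bitrade, and induction on `d = q - |C|` gives `d! ≤ |T0 ∩ Q|`. For `d = 1` the same count
shows that `Q` meets `T1`.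
-/

open Function

theorem Set.mul_ncard_le_ncard_of_mapsTo {α β : Type*} {s : Set α} {t : Set β} {f : α → β}
    (hf : Set.MapsTo f s t) (m : ℕ) (hm : ∀ b ∈ t, m ≤ (s ∩ f ⁻¹' {b}).ncard)
    (hs : s.Finite := by toFinite_tac) (ht : t.Finite := by toFinite_tac) :
    m * t.ncard ≤ s.ncard := by
  classical
  lift s to Finset α using hs
  lift t to Finset β using ht
  simp only [Set.ncard_coe_finset]
  refine Finset.mul_card_image_le_card_of_maps_to hf m fun b hb => ?_
  convert hm b hb using 1
  rw [← Set.ncard_coe_finset, Finset.coe_filter]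
  rfl

theorem Finset.exists_notMem_ne_of_card_add_one_lt {ι : Type*} [Fintype ι] [DecidableEq ι]
    {C : Finset ι} (j : ι) (hC : C.card + 1 < Fintype.card ι) : ∃ k ∉ C, k ≠ j := by
  obtain ⟨k, hk⟩ : ((insert j C)ᶜ).Nonempty := by
    rw [← Finset.card_pos, Finset.card_compl]
    have := Finset.card_insert_le j C
    omega
  rw [Finset.mem_compl, Finset.mem_insert, not_or] at hk
  exact ⟨k, hk.2, hk.1⟩

namespace IsPerfectBitrade

variable {V : Type*} {G : SimpleGraph V} {T0 T1 : Set V}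

theorem symm (h : IsPerfectBitrade G T0 T1) : IsPerfectBitrade G T1 T0 := by
  obtain ⟨hdisj, h0, h1, hball⟩ := h
  refine ⟨hdisj.symm, h1, h0, fun x => ?_⟩
  rcases hball x with ⟨hx0, hx1⟩ | hx
  · exact Or.inl ⟨hx1, hx0⟩
  · exact Or.inr fun y hy => hx y (Set.union_comm T1 T0 ▸ hy)

theorem exists_mem_ball1 (h : IsPerfectBitrade G T0 T1) {x w : V} (hx : x ∈ T0)
    (hxw : x ∈ ball1 G w) : ∃ y ∈ T1, y ∈ ball1 G w := by
  obtain ⟨-, y, ⟨hy, hyw⟩, -⟩ :=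
    (h.2.2.2 w).resolve_right fun hw => hw x (Or.inl hx) hxw
  exact ⟨y, hy, hyw⟩

theorem eq_of_mem_ball1 (h : IsPerfectBitrade G T0 T1) {x y w : V} (hx : x ∈ T0)
    (hy : y ∈ T0) (hxw : x ∈ ball1 G w) (hyw : y ∈ ball1 G w) : x = y := by
  obtain ⟨⟨z, -, hz⟩, -⟩ := (h.2.2.2 w).resolve_right fun hw => hw x (Or.inl hx) hxw
  rw [hz x ⟨hx, hxw⟩, hz y ⟨hy, hyw⟩]

end IsPerfectBitrade

namespace hammingGraph

variable {n q : ℕ}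

theorem update_mem_ball1 (x : Fin n → Fin q) (k : Fin n) (c : Fin q) :
    update x k c ∈ ball1 (hammingGraph n q) x := by
  by_cases hc : c = x k
  · exact Or.inl (hc ▸ update_eq_self k x)
  · refine Or.inr ?_
    change (Finset.univ.filter fun i => x i ≠ update x k c i).card = 1
    rw [Finset.card_eq_one]
    exact ⟨k, by ext i; by_cases hi : i = k <;> simp [hi, update_apply, Ne.symm hc]⟩

theorem exists_update_of_adj {x y : Fin n → Fin q} (h : (hammingGraph n q).Adj x y) :
    ∃ k c, c ≠ x k ∧ y = update x k c := by
  obtain ⟨k, hk⟩ := Finset.card_eq_one.mp (show hammingDist x y = 1 from h)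
  have hdiff : ∀ i, x i ≠ y i ↔ i = k := fun i => by
    simpa using Finset.ext_iff.mp hk i
  refine ⟨k, y k, fun he => (hdiff k).mpr rfl he.symm, funext fun i => ?_⟩
  by_cases hi : i = k
  · subst hi; simp
  · rw [update_of_ne hi]
    exact (not_not.mp (mt (hdiff i).mp hi)).symm

theorem exists_update_of_mem_ball1 [NeZero n] {x y : Fin n → Fin q}
    (h : y ∈ ball1 (hammingGraph n q) x) : ∃ k c, y = update x k c := by
  rcases h with rfl | hadj
  · exact ⟨0, y 0, (update_eq_self 0 y).symm⟩
  · obtain ⟨k, c, -, hy⟩ := exists_update_of_adj hadj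
    exact ⟨k, c, hy⟩

end hammingGraph

def subcube {n q : ℕ} (C : Finset (Fin n)) (u : Fin n → Fin q) : Set (Fin n → Fin q) :=
  {x | ∀ i ∈ C, x i = u i}

section Subcube

variable {n q : ℕ} {C : Finset (Fin n)} {u x : Fin n → Fin q}

theorem self_mem_subcube : u ∈ subcube C u := fun _ _ => rfl

theorem update_mem_subcube (hx : x ∈ subcube C u) {k : Fin n} (hk : k ∉ C) (c : Fin q) :
    update x k c ∈ subcube C u := fun i hi => by
  rw [update_of_ne (ne_of_mem_of_not_mem hi hk)]
  exact hx i hi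

theorem subcube_insert (hx : x ∈ subcube C u) (k : Fin n) :
    subcube (insert k C) x = subcube C u ∩ (fun y => y k) ⁻¹' {x k} := by
  ext y
  simp only [subcube, Finset.mem_insert, forall_eq_or_imp, Set.mem_inter_iff,
    Set.mem_preimage, Set.mem_singleton_iff, Set.mem_ofPred_eq]
  exact ⟨fun ⟨hk, hC⟩ => ⟨fun i hi => (hC i hi).trans (hx i hi), hk⟩,
    fun ⟨hC, hk⟩ => ⟨hk, fun i hi => (hC i hi).trans (hx i hi).symm⟩⟩

end Subcube

namespace IsPerfectBitrade

open hammingGraph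

variable {n q : ℕ} {T0 T1 : Set (Fin n → Fin q)}

theorem eq_of_eq_off_pair (h : IsPerfectBitrade (hammingGraph n q) T0 T1)
    {x y : Fin n → Fin q} (hx : x ∈ T0) (hy : y ∈ T0) {a b : Fin n}
    (hxy : ∀ i, i ≠ a → i ≠ b → x i = y i) : x = y := by
  set w := update x a (y a)
  have hxw : x ∈ ball1 (hammingGraph n q) w := by simpa [w] using update_mem_ball1 w a (x a)
  have hyw : y ∈ ball1 (hammingGraph n q) w := by
    convert update_mem_ball1 w b (y b) using 1
    funext i
    by_cases hb : i = b
    · subst hb; simp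
    by_cases ha : i = a
    · subst ha; simp [w, hb]
    · simp [w, ha, hb, hxy i ha hb]
  exact h.eq_of_mem_ball1 hx hy hxw hyw

theorem exists_partner (h : IsPerfectBitrade (hammingGraph n q) T0 T1)
    {u : Fin n → Fin q} (hu : u ∈ T0) : ∃ j e, e ≠ u j ∧ update u j e ∈ T1 := by
  obtain ⟨p, hp, hpu⟩ := h.exists_mem_ball1 hu (Or.inl rfl)
  rcases hpu with rfl | hadj
  · exact absurd hp (Set.disjoint_left.mp h.1 hu)
  · obtain ⟨j, e, hej, rfl⟩ := exists_update_of_adj hadj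
    exact ⟨j, e, hej, hp⟩

theorem eq_of_update_update_mem (h : IsPerfectBitrade (hammingGraph n q) T0 T1)
    {u : Fin n → Fin q} {k t : Fin n} (htk : t ≠ k) {c₁ c₂ c₁' c₂' : Fin q}
    (h₁ : update (update u k c₁) t c₁' ∈ T0) (h₂ : update (update u k c₂) t c₂' ∈ T0) :
    c₁ = c₂ := by
  have := congrFun (h.eq_of_eq_off_pair h₁ h₂ (a := k) (b := t) fun i hk ht => by
    simp [hk, ht]) k
  simpa [Ne.symm htk] using this

theorem exists_update_update_mem (h : IsPerfectBitrade (hammingGraph n q) T0 T1)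
    {u : Fin n → Fin q} (hu : u ∈ T0) {j k : Fin n} {e c : Fin q} (he : e ≠ u j)
    (hp : update u j e ∈ T1) (hkj : k ≠ j) (hc : c ≠ u k) :
    ∃ t, t ≠ k ∧ t ≠ j ∧ ∃ c', update (update u k c) t c' ∈ T1 := by
  have : NeZero n := ⟨k.pos.ne'⟩
  have hu' : u ∈ ball1 (hammingGraph n q) (update u k c) := by
    simpa using update_mem_ball1 (update u k c) k (u k)
  obtain ⟨z, hz, hzw⟩ := h.exists_mem_ball1 hu hu'
  obtain ⟨t, c', rfl⟩ := exists_update_of_mem_ball1 hzw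
  have hzp : t = k ∨ t = j → update (update u k c) t c' = update u j e := fun htkj =>
    h.symm.eq_of_eq_off_pair hz hp (a := k) (b := j) fun i hk hj => by
      rcases htkj with rfl | rfl <;> simp [hk, hj]
  refine ⟨t, fun htk => ?_, fun htj => ?_, c', hz⟩
  · have := congrFun (hzp (Or.inl htk)) j
    subst htk
    exact he (by simpa [Ne.symm hkj] using this.symm)
  · have := congrFun (hzp (Or.inr htj)) k
    subst htj
    exact hc (by simpa [hkj] using this)

variable {C : Finset (Fin n)} {u : Fin n → Fin q}

theorem ncard_unattained_le (h : IsPerfectBitrade (hammingGraph n q) T0 T1) (hu : u ∈ T0)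
    {j k : Fin n} {e : Fin q} (he : e ≠ u j) (hp : update u j e ∈ T1) (hkC : k ∉ C)
    (hkj : k ≠ j) :
    {c | c ≠ u k ∧ ∀ x ∈ T1 ∩ subcube C u, x k ≠ c}.ncard ≤ (C.erase j).card := by
  have hwit : ∀ c ∈ {c | c ≠ u k ∧ ∀ x ∈ T1 ∩ subcube C u, x k ≠ c},
      ∃ t ∈ C.erase j, ∃ c', update (update u k c) t c' ∈ T1 := by
    rintro c ⟨hc, hc'⟩
    obtain ⟨t, htk, htj, c', hz⟩ := h.exists_update_update_mem hu he hp hkj hc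
    refine ⟨t, Finset.mem_erase.mpr ⟨htj, by_contra fun htC => hc' _ ⟨hz, ?_⟩ ?_⟩, c', hz⟩
    · exact update_mem_subcube (update_mem_subcube self_mem_subcube hkC c) htC c'
    · simp [Ne.symm htk]
  have : Nonempty (Fin n) := ⟨k⟩
  choose! f hfC hf using hwit
  rw [← Set.ncard_coe_finset]
  refine Set.ncard_le_ncard_of_injOn f hfC fun c₁ hc₁ c₂ hc₂ hf₁₂ => ?_
  obtain ⟨c₁', h₁⟩ := hf c₁ hc₁
  obtain ⟨c₂', h₂⟩ := hf c₂ hc₂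
  rw [hf₁₂] at h₁
  exact h.symm.eq_of_update_update_mem
    (ne_of_mem_of_not_mem (Finset.mem_of_mem_erase (hfC c₂ hc₂)) hkC) h₁ h₂

theorem inter_subcube_nonempty (h : IsPerfectBitrade (hammingGraph n q) T0 T1) (hu : u ∈ T0)
    (hCq : C.card < q) (hqn : q < n) : (T1 ∩ subcube C u).Nonempty := by
  obtain ⟨j, e, he, hp⟩ := h.exists_partner hu
  obtain ⟨k, hkC, hkj⟩ := Finset.exists_notMem_ne_of_card_add_one_lt (C := C) j
    (by rw [Fintype.card_fin]; omega)
  by_cases hjC : j ∈ C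
  · by_contra hempty
    have hbad := h.ncard_unattained_le hu he hp hkC hkj
    simp only [Set.not_nonempty_iff_eq_empty.mp hempty, Set.mem_empty_iff_false,
      IsEmpty.forall_iff, implies_true, and_true] at hbad
    have hcard : {c : Fin q | c ≠ u k}.ncard = q - 1 := by
      simp [Set.ncard_eq_toFinset_card', Finset.filter_ne']
    rw [hcard, Finset.card_erase_of_mem hjC] at hbad
    have := Finset.card_pos.mpr ⟨j, hjC⟩
    omega
  · exact ⟨_, hp, update_mem_subcube self_mem_subcube hjC e⟩

theorem exists_le_card_add_ncard_image (h : IsPerfectBitrade (hammingGraph n q) T0 T1)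
    (hu : u ∈ T0 ∪ T1) (hCn : C.card + 1 < n) :
    ∃ k ∉ C, q ≤ C.card + ((fun x => x k) '' ((T0 ∪ T1) ∩ subcube C u)).ncard := by
  wlog hu0 : u ∈ T0 generalizing T0 T1
  · rw [Set.union_comm]
    exact this h.symm (Set.union_comm T0 T1 ▸ hu) (hu.resolve_left hu0)
  obtain ⟨j, e, he, hp⟩ := h.exists_partner hu0
  obtain ⟨k, hkC, hkj⟩ := Finset.exists_notMem_ne_of_card_add_one_lt j
    (by rwa [Fintype.card_fin])
  refine ⟨k, hkC, ?_⟩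
  set values := (fun x => x k) '' ((T0 ∪ T1) ∩ subcube C u)
  have hsub : valuesᶜ ⊆ {c | c ≠ u k ∧ ∀ x ∈ T1 ∩ subcube C u, x k ≠ c} := fun c hc =>
    ⟨fun huk => hc ⟨u, ⟨Or.inl hu0, self_mem_subcube⟩, huk.symm⟩,
      fun x hx hxc => hc ⟨x, ⟨Or.inr hx.1, hx.2⟩, hxc⟩⟩
  have hcompl := Set.ncard_add_ncard_compl values
  rw [Nat.card_eq_fintype_card, Fintype.card_fin] at hcompl
  have := (Set.ncard_le_ncard hsub).trans (h.ncard_unattained_le hu0 he hp hkC hkj)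
  have := Finset.card_erase_le (s := C) (a := j)
  omega

theorem factorial_le_ncard_inter_subcube (h : IsPerfectBitrade (hammingGraph n q) T0 T1)
    (hqn : q < n) {d : ℕ} (hd : 1 ≤ d) {C : Finset (Fin n)} {u : Fin n → Fin q}
    (hCd : C.card + d = q) (hu : u ∈ T0 ∪ T1) : d.factorial ≤ (T0 ∩ subcube C u).ncard := by
  induction d, hd using Nat.le_induction generalizing C u with
  | base =>
    rw [Nat.factorial_one, Nat.one_le_iff_ne_zero, ← Nat.pos_iff_ne_zero, Set.ncard_pos]
    rcases hu with hu | hu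
    · exact ⟨u, hu, self_mem_subcube⟩
    · exact h.symm.inter_subcube_nonempty hu (by omega) hqn
  | succ d _ ih =>
    obtain ⟨k, hkC, hvalues⟩ := h.exists_le_card_add_ncard_image (C := C) hu (by omega)
    set values := (fun x => x k) '' ((T0 ∪ T1) ∩ subcube C u)
    have hmaps : Set.MapsTo (fun x => x k) (T0 ∩ subcube C u) values := fun x hx =>
      Set.mem_image_of_mem _ ⟨Or.inl hx.1, hx.2⟩
    calc (d + 1).factorial = d.factorial * (d + 1) := by rw [Nat.factorial_succ, mul_comm]
      _ ≤ d.factorial * values.ncard := by gcongr; omega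
      _ ≤ (T0 ∩ subcube C u).ncard := by
        refine Set.mul_ncard_le_ncard_of_mapsTo hmaps _ ?_
        rintro _ ⟨v, ⟨hv, hvC⟩, rfl⟩
        rw [Set.inter_assoc, ← subcube_insert hvC]
        exact ih (by rw [Finset.card_insert_of_notMem hkC]; omega) hv

end IsPerfectBitrade

theorem statement15_general (q : ℕ) (T0 T1 : Set (Fin (q + 1) → Fin q))
    (hbt : IsPerfectBitrade (hammingGraph (q + 1) q) T0 T1) :
    Nat.factorial q ≤ T0.ncard := by
  obtain ⟨u, hu⟩ := hbt.2.1
  have hq : 1 ≤ q := Fin.pos (u 0)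
  simpa [subcube] using
    hbt.factorial_le_ncard_inter_subcube (lt_add_one q) hq (C := ∅) (by simp) (Or.inl hu)

/-- For `q ≥ 3`, every (nonempty) perfect bitrade in `H(q+1,q)` has volume
at least `q!`. -/
theorem statement15 (q : ℕ) (hq : 3 ≤ q) (T0 T1 : Set (Fin (q + 1) → Fin q))
    (hbt : IsPerfectBitrade (hammingGraph (q + 1) q) T0 T1) :
    Nat.factorial q ≤ T0.ncard :=
  statement15_general q T0 T1 hbt
end
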